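/- arXiv:2409.17911 — 3 statements merged into one kernel-verified Lean document; each statement's English description precedes it below -/
import Mathlib

section
/- For Hermitian positive definite matrices X and Y of the same size, tr(Y⁻¹X + X⁻¹Y − 2I) ≥ 0, with equality if and only if X = Y. -/
open Matrix
open scoped ComplexOrder

/-!
`Y⁻¹X + X⁻¹Y − 2I = Y⁻¹ (X − Y) X⁻¹ (X − Y)`. Writing `Y⁻¹ = PᴴP` and `X⁻¹ = QᴴQ` with `P`, `Q`
invertible, cyclicity of the trace turns the trace of the right-hand side into `tr (Cᴴ C)` for
`C = Q (X − Y) Pᴴ`, the squared Frobenius norm of `C`, which vanishes exactly when `X = Y`.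
-/

namespace Matrix
variable {n 𝕜 : Type*} [Fintype n] [DecidableEq n] [RCLike 𝕜]

theorem PosDef.exists_isUnit_eq_conjTranspose_mul_self {A : Matrix n n 𝕜} (hA : A.PosDef) :
    ∃ P : Matrix n n 𝕜, IsUnit P ∧ A = Pᴴ * P := by
  open scoped MatrixOrder in
  exact CStarAlgebra.isStrictlyPositive_iff_eq_star_mul_self.mp hA.isStrictlyPositive

theorem inv_mul_add_inv_mul_sub_two_smul_one {R : Type*} [CommRing R] {X Y : Matrix n n R}
    (hX : IsUnit X) (hY : IsUnit Y) :
    Y⁻¹ * X + X⁻¹ * Y - (2 : R) • 1 = Y⁻¹ * (X - Y) * X⁻¹ * (X - Y) := by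
  rw [isUnit_iff_isUnit_det] at hX hY
  simp only [mul_sub, sub_mul, Matrix.mul_assoc, nonsing_inv_mul _ hX, nonsing_inv_mul _ hY,
    mul_nonsing_inv_cancel_left _ _ hX, Matrix.mul_one, Matrix.one_mul, two_smul]
  abel

theorem PosDef.exists_trace_mul_mul_mul_eq_trace_conjTranspose_mul_self {A B D : Matrix n n 𝕜}
    (hA : A.PosDef) (hB : B.PosDef) (hD : D.IsHermitian) :
    ∃ C : Matrix n n 𝕜, (A * D * B * D).trace = (Cᴴ * C).trace ∧ (C = 0 ↔ D = 0) := by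
  obtain ⟨P, hP, rfl⟩ := hA.exists_isUnit_eq_conjTranspose_mul_self
  obtain ⟨Q, hQ, rfl⟩ := hB.exists_isUnit_eq_conjTranspose_mul_self
  refine ⟨Q * D * Pᴴ, ?_, ?_⟩
  · simp only [conjTranspose_mul, conjTranspose_conjTranspose, hD.eq, Matrix.mul_assoc]
    rw [trace_mul_comm]
    simp only [Matrix.mul_assoc]
  · have hP' : IsUnit Pᴴ := hP.star
    rw [hP'.mul_left_eq_zero, hQ.mul_right_eq_zero]

theorem PosDef.trace_mul_mul_mul_nonneg {A B D : Matrix n n 𝕜}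
    (hA : A.PosDef) (hB : B.PosDef) (hD : D.IsHermitian) : 0 ≤ (A * D * B * D).trace := by
  obtain ⟨C, hC, -⟩ := hA.exists_trace_mul_mul_mul_eq_trace_conjTranspose_mul_self hB hD
  exact hC ▸ (posSemidef_conjTranspose_mul_self C).trace_nonneg

theorem PosDef.trace_mul_mul_mul_eq_zero_iff {A B D : Matrix n n 𝕜}
    (hA : A.PosDef) (hB : B.PosDef) (hD : D.IsHermitian) : (A * D * B * D).trace = 0 ↔ D = 0 := by
  obtain ⟨C, hC, hCD⟩ := hA.exists_trace_mul_mul_mul_eq_trace_conjTranspose_mul_self hB hD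
  rw [hC, trace_conjTranspose_mul_self_eq_zero_iff, hCD]

end Matrix

theorem stmt2 {N : ℕ} (X Y : Matrix (Fin N) (Fin N) ℂ)
    (hX : X.PosDef) (hY : Y.PosDef) :
    0 ≤ (Y⁻¹ * X + X⁻¹ * Y - (2 : ℂ) • (1 : Matrix (Fin N) (Fin N) ℂ)).trace.re ∧
      ((Y⁻¹ * X + X⁻¹ * Y - (2 : ℂ) • (1 : Matrix (Fin N) (Fin N) ℂ)).trace = 0 ↔ X = Y) := by
  rw [inv_mul_add_inv_mul_sub_two_smul_one hX.isUnit hY.isUnit]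
  have hXY : (X - Y).IsHermitian := hX.isHermitian.sub hY.isHermitian
  exact ⟨Complex.nonneg_iff.mp (hY.inv.trace_mul_mul_mul_nonneg hX.inv hXY) |>.1,
    (hY.inv.trace_mul_mul_mul_eq_zero_iff hX.inv hXY).trans sub_eq_zero⟩
end

section
/- For Hermitian positive definite matrices X and Y of the same size, ln det((X+Y)/2) − (1/2) ln det(XY) ≥ 0, with equality if and only if X = Y. -/
/-!
Write `X = Bᴴ * B` and `Y = Bᴴ * Z * B` with `B` invertible and `Z` positive definite. The
congruence by `B` multiplies `det ((X + Y) / 2)` by `|det B|²` and `det (X * Y)` by `|det B|⁴`,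
so the divergence of `(X, Y)` equals that of `(1, Z)`, which is
`∑ i, (log ((1 + μ i) / 2) - log (μ i) / 2)` over the eigenvalues `μ i` of `Z`.
By strict concavity of `log` every summand is nonnegative and vanishes only at `μ i = 1`,
and a Hermitian matrix whose eigenvalues are all `1` is `1`.
-/

open Matrix
open scoped ComplexOrder

lemma Real.half_log_lt_log_one_add_div_two {t : ℝ} (ht : 0 < t) (h1 : t ≠ 1) :
    1 / 2 * Real.log t < Real.log ((1 + t) / 2) := by
  have := strictConcaveOn_log_Ioi.2 (Set.mem_Ioi.2 one_pos) (Set.mem_Ioi.2 ht) (Ne.symm h1)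
    (by norm_num : (0 : ℝ) < 1 / 2) (by norm_num : (0 : ℝ) < 1 / 2) (by norm_num)
  simp only [smul_eq_mul, Real.log_one, mul_zero, zero_add] at this
  rwa [show (1 + t) / 2 = 1 / 2 * 1 + 1 / 2 * t by ring]

lemma Real.half_log_le_log_one_add_div_two {t : ℝ} (ht : 0 < t) :
    1 / 2 * Real.log t ≤ Real.log ((1 + t) / 2) := by
  rcases eq_or_ne t 1 with rfl | h1
  · norm_num
  · exact (Real.half_log_lt_log_one_add_div_two ht h1).le

namespace Matrix

variable {𝕜 n : Type*} [RCLike 𝕜] [Fintype n] [DecidableEq n]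

lemma IsHermitian.det_cfc {A : Matrix n n 𝕜} (hA : A.IsHermitian) (f : ℝ → ℝ) :
    (cfc f A).det = ∏ i, (f (hA.eigenvalues i) : 𝕜) := by
  rw [hA.cfc_eq, IsHermitian.cfc, Unitary.conjStarAlgAut_apply, det_mul, det_mul, mul_right_comm,
    ← det_mul, Unitary.mul_star_self_of_mem hA.eigenvectorUnitary.2, det_one, one_mul,
    det_diagonal]
  rfl

lemma IsHermitian.eq_one_of_eigenvalues_eq_one {A : Matrix n n 𝕜} (hA : A.IsHermitian)
    (h : ∀ i, hA.eigenvalues i = 1) : A = 1 := by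
  rw [← cfc_id' ℝ A, ← cfc_const_one ℝ A]
  refine cfc_congr fun x hx => ?_
  obtain ⟨i, rfl⟩ := hA.spectrum_real_eq_range_eigenvalues ▸ hx
  exact h i

open scoped MatrixOrder in
lemma PosDef.exists_eq_conjTranspose_mul_self {A : Matrix n n 𝕜} (hA : A.PosDef) :
    ∃ B : Matrix n n 𝕜, IsUnit B ∧ A = Bᴴ * B := by
  obtain ⟨B, rfl⟩ := CStarAlgebra.nonneg_iff_eq_star_mul_self.mp hA.posSemidef.nonneg
  refine ⟨B, (isUnit_iff_isUnit_det B).2 ?_, rfl⟩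
  have := (isUnit_iff_isUnit_det _).1 hA.isUnit
  rw [det_mul] at this
  exact isUnit_of_mul_isUnit_right this

lemma PosDef.exists_eq_conjTranspose_mul_self_and_conjTranspose_mul_mul {X Y : Matrix n n 𝕜}
    (hX : X.PosDef) (hY : Y.PosDef) :
    ∃ B Z : Matrix n n 𝕜, IsUnit B ∧ Z.PosDef ∧ X = Bᴴ * B ∧ Y = Bᴴ * Z * B := by
  obtain ⟨B, hB, rfl⟩ := hX.exists_eq_conjTranspose_mul_self
  refine ⟨B, B⁻¹ᴴ * Y * B⁻¹, hB, hY.conjTranspose_mul_mul_same ?_, rfl, ?_⟩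
  · exact mulVec_injective_iff_isUnit.2 (isUnit_nonsing_inv_iff.2 hB)
  · rw [conjTranspose_nonsing_inv, ← Matrix.mul_assoc, ← Matrix.mul_assoc,
      mul_nonsing_inv _ ((isUnit_iff_isUnit_det _).1 ((isUnit_conjTranspose B).2 hB)),
      Matrix.one_mul, nonsing_inv_mul_cancel_right B Y ((isUnit_iff_isUnit_det B).1 hB)]

lemma PosDef.re_det_pos {A : Matrix n n ℂ} (hA : A.PosDef) : 0 < A.det.re :=
  (Complex.pos_iff.1 hA.det_pos).1

end Matrix

section JensenBregman

variable {n : Type*} [Fintype n] [DecidableEq n]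

/-- The squared Jensen–Bregman LogDet divergence `d_J²(X, Y)`. -/
noncomputable def jbldSq (X Y : Matrix n n ℂ) : ℝ :=
  Real.log (((2 : ℂ)⁻¹ • (X + Y)).det.re) - (1 / 2) * Real.log ((X * Y).det.re)

lemma jbldSq_self {X : Matrix n n ℂ} (hX : X.PosDef) : jbldSq X X = 0 := by
  have hre := Complex.pos_iff.1 hX.det_pos
  have hhalf : (2 : ℂ)⁻¹ • (X + X) = X := by
    rw [← two_smul ℂ X, smul_smul, inv_mul_cancel₀ two_ne_zero, one_smul]
  rw [jbldSq, hhalf, det_mul, Complex.mul_re, ← hre.2, mul_zero, sub_zero,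
    Real.log_mul hre.1.ne' hre.1.ne']
  ring

lemma jbldSq_conjTranspose_mul_mul_same {A C B : Matrix n n ℂ} (hA : A.PosDef) (hC : C.PosDef)
    (hB : IsUnit B) : jbldSq (Bᴴ * A * B) (Bᴴ * C * B) = jbldSq A C := by
  set c : ℝ := Complex.normSq B.det
  have hc : 0 < c := Complex.normSq_pos.2 ((isUnit_iff_isUnit_det B).1 hB).ne_zero
  have hdet : ∀ M : Matrix n n ℂ, (Bᴴ * M * B).det = c * M.det := fun M => by
    rw [det_mul, det_mul, det_conjTranspose, Complex.normSq_eq_conj_mul_self, Complex.star_def]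
    ring
  have hsum : (2 : ℂ)⁻¹ • (Bᴴ * A * B + Bᴴ * C * B) = Bᴴ * ((2 : ℂ)⁻¹ • (A + C)) * B := by
    rw [← add_mul, ← mul_add, mul_smul_comm, smul_mul_assoc]
  have hprod : (Bᴴ * A * B * (Bᴴ * C * B)).det = ((c ^ 2 : ℝ) : ℂ) * (A * C).det := by
    rw [det_mul, hdet, hdet, det_mul]
    push_cast
    ring
  have hAC : 0 < ((2 : ℂ)⁻¹ • (A + C)).det.re := ((hA.add hC).smul (by norm_num)).re_det_pos
  have hAC' : 0 < (A * C).det.re := by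
    rw [det_mul]
    exact (Complex.pos_iff.1 (mul_pos hA.det_pos hC.det_pos)).1
  rw [jbldSq, jbldSq, hsum, hprod, hdet, Complex.re_ofReal_mul, Complex.re_ofReal_mul,
    Real.log_mul hc.ne' hAC.ne', Real.log_mul (by positivity) hAC'.ne', Real.log_pow]
  ring

lemma jbldSq_one_left {Z : Matrix n n ℂ} (hZ : Z.PosDef) :
    jbldSq 1 Z = ∑ i, (Real.log ((1 + hZ.isHermitian.eigenvalues i) / 2)
      - 1 / 2 * Real.log (hZ.isHermitian.eigenvalues i)) := by
  have hZsa : IsSelfAdjoint Z := hZ.isHermitian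
  have hmid : (2 : ℂ)⁻¹ • (1 + Z) = cfc (fun t : ℝ => 2⁻¹ * (1 + t)) Z := by
    rw [cfc_const_mul (2⁻¹ : ℝ) (fun t => 1 + t) Z, cfc_const_add (1 : ℝ) (fun t => t) Z,
      cfc_id' ℝ Z, map_one, ← Complex.coe_smul]
    norm_num
  have hpos : ∀ i, 0 < hZ.isHermitian.eigenvalues i := hZ.eigenvalues_pos
  rw [jbldSq, hmid, hZ.isHermitian.det_cfc, one_mul, hZ.isHermitian.det_eq_prod_eigenvalues]
  simp only [RCLike.ofReal_eq_complex_ofReal, ← Complex.ofReal_prod, Complex.ofReal_re]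
  rw [Real.log_prod fun i _ => by have := hpos i; positivity,
    Real.log_prod fun i _ => (hpos i).ne', Finset.mul_sum, ← Finset.sum_sub_distrib]
  simp only [div_eq_inv_mul]

lemma jbldSq_one_left_nonneg {Z : Matrix n n ℂ} (hZ : Z.PosDef) : 0 ≤ jbldSq 1 Z := by
  rw [jbldSq_one_left hZ]
  exact Finset.sum_nonneg fun i _ =>
    sub_nonneg.2 (Real.half_log_le_log_one_add_div_two (hZ.eigenvalues_pos i))

lemma jbldSq_one_left_eq_zero_iff {Z : Matrix n n ℂ} (hZ : Z.PosDef) :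
    jbldSq 1 Z = 0 ↔ Z = 1 := by
  refine ⟨fun h => hZ.isHermitian.eq_one_of_eigenvalues_eq_one fun i => ?_, ?_⟩
  · rw [jbldSq_one_left hZ, Finset.sum_eq_zero_iff_of_nonneg fun i _ =>
      sub_nonneg.2 (Real.half_log_le_log_one_add_div_two (hZ.eigenvalues_pos i))] at h
    by_contra h1
    exact (sub_pos.2 (Real.half_log_lt_log_one_add_div_two (hZ.eigenvalues_pos i) h1)).ne'
      (h i (Finset.mem_univ i))
  · rintro rfl
    exact jbldSq_self PosDef.one

end JensenBregman

theorem stmt3 {N : ℕ} (X Y : Matrix (Fin N) (Fin N) ℂ)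
    (hX : X.PosDef) (hY : Y.PosDef) :
    0 ≤ Real.log (((2 : ℂ)⁻¹ • (X + Y)).det.re) - (1 / 2) * Real.log ((X * Y).det.re) ∧
      (Real.log (((2 : ℂ)⁻¹ • (X + Y)).det.re) - (1 / 2) * Real.log ((X * Y).det.re) = 0
        ↔ X = Y) := by
  obtain ⟨B, Z, hB, hZ, rfl, rfl⟩ :=
    hX.exists_eq_conjTranspose_mul_self_and_conjTranspose_mul_mul hY
  have hX1 : Bᴴ * B = Bᴴ * 1 * B := by rw [Matrix.mul_one]
  have hcancel : Bᴴ * 1 * B = Bᴴ * Z * B ↔ Z = 1 := by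
    rw [hB.mul_left_inj, ((isUnit_conjTranspose B).2 hB).mul_right_inj, eq_comm]
  change 0 ≤ jbldSq _ _ ∧ (jbldSq _ _ = 0 ↔ _)
  rw [hX1, jbldSq_conjTranspose_mul_mul_same PosDef.one hZ hB, hcancel]
  exact ⟨jbldSq_one_left_nonneg hZ, jbldSq_one_left_eq_zero_iff hZ⟩
end

section
/- For N×N HPD matrices X and Y and W ∈ St(M,ℂᴺ) with M ≤ N, the directional derivative of ψ(W) = ln det(Wᴴ((X+Y)/2)W) − (1/2) ln det((WᴴXW)(WᴴYW)) in the direction R ∈ ℂ^{N×M} equals ⟨G, R⟩, where G = 2(X+Y)W(WᴴXW + WᴴYW)⁻¹ − XW(WᴴXW)⁻¹ − YW(WᴴYW)⁻¹ and ⟨G,R⟩ = Re tr(GᴴR). -/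
/-!
Jacobi's formula `d det A = tr (adj A · dA)` along the path `t ↦ (W + tR)ᴴ P (W + tR)`,
whose velocity at `0` is `WᴴPR + RᴴPW`, gives `d log det Q = Re tr (Q⁻¹ (WᴴPR + RᴴPW))` for
`Q = WᴴPW`; by Hermitian symmetry this is `2 Re tr ((P W Q⁻¹)ᴴ R)`. The three compressions are
positive definite because `W` is an isometry, so their determinants are positive reals, and the
logarithmic derivative of `det A · det B` is the sum of those of the factors.
-/

open Matrix
open scoped ComplexOrder

theorem Matrix.trace_adjugate_mul {n R : Type*} [Fintype n] [DecidableEq n] [CommRing R]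
    (A B : Matrix n n R) :
    (adjugate A * B).trace = ∑ i, (A.updateCol i fun k => B k i).det := by
  refine Finset.sum_congr rfl fun i _ => ?_
  rw [← cramer_apply, cramer_eq_adjugate_mulVec]
  simp [Matrix.mul_apply, Matrix.mulVec, dotProduct]

theorem Matrix.adjugate_eq_det_smul_inv {n K : Type*} [Fintype n] [DecidableEq n] [Field K]
    {A : Matrix n n K} (h : A.det ≠ 0) : adjugate A = A.det • A⁻¹ := by
  rw [inv_def, smul_smul, Ring.inverse_eq_inv, mul_inv_cancel₀ h, one_smul]

theorem Matrix.smul_mul_mul_inv_conjTranspose_smul_mul_mul {n m K : Type*} [Fintype n]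
    [Fintype m] [DecidableEq m] [Field K] [StarRing K] {c : K} (hc : c ≠ 0) (P : Matrix n n K)
    (W : Matrix n m K) (hQ : IsUnit (Wᴴ * P * W).det) :
    c • P * W * (Wᴴ * (c • P) * W)⁻¹ = P * W * (Wᴴ * P * W)⁻¹ := by
  have : Invertible c := invertibleOfNonzero hc
  simp only [Matrix.mul_smul, Matrix.smul_mul]
  rw [Matrix.inv_smul _ c hQ, invOf_eq_inv, Matrix.mul_smul, smul_smul, mul_inv_cancel₀ hc,
    one_smul]

section Jacobi

variable {n : Type*} [Fintype n] [DecidableEq n] {𝕜 : Type*} [NontriviallyNormedField 𝕜]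
  {R : Type*} [NormedCommRing R] [NormedAlgebra 𝕜 R]

theorem Matrix.hasDerivAt_det {A : 𝕜 → Matrix n n R} {A' : Matrix n n R} {x : 𝕜}
    (h : ∀ i j, HasDerivAt (fun t => A t i j) (A' i j) x) :
    HasDerivAt (fun t => (A t).det) ((adjugate (A x) * A').trace) x := by
  have hLeibniz := HasDerivAt.fun_sum (u := Finset.univ) fun (σ : Equiv.Perm n) _ =>
    (HasDerivAt.fun_finsetProd (u := Finset.univ) fun i _ => h (σ i) i).const_mul
      ((Equiv.Perm.sign σ : ℤ) : R)
  simp only [← det_apply'] at hLeibniz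
  refine hLeibniz.congr_deriv ?_
  rw [trace_adjugate_mul]
  simp only [det_apply', Finset.mul_sum]
  rw [Finset.sum_comm]
  refine Finset.sum_congr rfl fun i _ => Finset.sum_congr rfl fun σ _ => ?_
  rw [← Finset.mul_prod_erase Finset.univ _ (Finset.mem_univ i), smul_eq_mul,
    mul_comm (∏ j ∈ _, _)]
  congr 2
  · simp
  · exact Finset.prod_congr rfl fun j hj => by
      simp [(Finset.mem_erase.mp hj).1]

theorem Matrix.hasDerivAt_det_add_smul_add_sq_smul (A B C : Matrix n n R) :
    HasDerivAt (fun t : 𝕜 => (A + t • B + t ^ 2 • C).det) ((adjugate A * B).trace) 0 := by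
  have h := hasDerivAt_det (A := fun t : 𝕜 => A + t • B + t ^ 2 • C) (A' := B) (x := 0)
    fun i j => by
      simpa using (((hasDerivAt_id (0 : 𝕜)).smul_const (B i j)).const_add (A i j)).fun_add
        ((hasDerivAt_pow 2 (0 : 𝕜)).smul_const (C i j))
  simpa using h

end Jacobi

theorem HasDerivAt.mul_of_eq_mul {𝕜 𝔸 : Type*} [NontriviallyNormedField 𝕜]
    [NormedCommRing 𝔸] [NormedAlgebra 𝕜 𝔸] {f g : 𝕜 → 𝔸} {a b c e : 𝔸} {x : 𝕜}
    (hf : HasDerivAt f (c * a) x) (hg : HasDerivAt g (e * b) x) (hfx : f x = c)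
    (hgx : g x = e) :
    HasDerivAt (fun t => f t * g t) (c * e * (a + b)) x :=
  (hf.mul hg).congr_deriv (by rw [hfx, hgx]; ring)

theorem HasDerivAt.log_re_of_eq_mul {f : ℝ → ℂ} {c d : ℂ} {x : ℝ}
    (hf : HasDerivAt f (c * d) x) (hfx : f x = c) (hc : 0 < c) :
    HasDerivAt (fun t => Real.log (f t).re) d.re x := by
  obtain ⟨hre, him⟩ := Complex.lt_def.mp hc
  have h := (Complex.reCLM.hasFDerivAt.comp_hasDerivAt x hf).log
    (by simpa [hfx] using hre.ne')
  simp only [Function.comp_def, Complex.reCLM_apply, Complex.mul_re, ← him, hfx] at h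
  rwa [Complex.zero_im, zero_mul, sub_zero, mul_div_cancel_left₀ _ hre.ne'] at h

theorem Matrix.conjTranspose_add_smul_mul_mul_add_smul {n m : Type*} [Fintype n]
    (P : Matrix n n ℂ) (W R : Matrix n m ℂ) (t : ℝ) :
    (W + t • R)ᴴ * P * (W + t • R)
      = Wᴴ * P * W + t • (Wᴴ * P * R + Rᴴ * P * W) + t ^ 2 • (Rᴴ * P * R) := by
  simp only [conjTranspose_add, conjTranspose_smul, star_trivial, Matrix.add_mul,
    Matrix.mul_add, Matrix.smul_mul, Matrix.mul_smul, smul_add, smul_smul, ← pow_two]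
  abel

theorem Matrix.hasDerivAt_det_conjTranspose_mul_mul {n m : Type*} [Fintype n] [Fintype m]
    [DecidableEq m] (P : Matrix n n ℂ) (W R : Matrix n m ℂ) (hQ : (Wᴴ * P * W).det ≠ 0) :
    HasDerivAt (fun t : ℝ => ((W + t • R)ᴴ * P * (W + t • R)).det)
      ((Wᴴ * P * W).det * ((Wᴴ * P * W)⁻¹ * (Wᴴ * P * R + Rᴴ * P * W)).trace) 0 := by
  have h := hasDerivAt_det_add_smul_add_sq_smul (𝕜 := ℝ) (Wᴴ * P * W)
    (Wᴴ * P * R + Rᴴ * P * W) (Rᴴ * P * R)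
  simp only [← conjTranspose_add_smul_mul_mul_add_smul] at h
  rwa [adjugate_eq_det_smul_inv hQ, Matrix.smul_mul, trace_smul, smul_eq_mul] at h

theorem Matrix.re_trace_mul_conjTranspose_mul_mul_add {n m : Type*} [Fintype n] [Fintype m]
    {P : Matrix n n ℂ} (hP : P.IsHermitian) {B : Matrix m m ℂ} (hB : B.IsHermitian) (W R : Matrix n m ℂ) :
    (B * (Wᴴ * P * R + Rᴴ * P * W)).trace.re = 2 * ((P * W * B)ᴴ * R).trace.re := by
  have hS : (P * W * B)ᴴ * R = B * (Wᴴ * P * R) := by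
    simp only [conjTranspose_mul, hB.eq, hP.eq, Matrix.mul_assoc]
  have hS_star : (B * (Rᴴ * P * W)).trace = star (B * (Wᴴ * P * R)).trace := by
    rw [← trace_conjTranspose, trace_mul_comm]
    simp only [conjTranspose_mul, hB.eq, hP.eq, conjTranspose_conjTranspose, Matrix.mul_assoc]
  rw [hS, Matrix.mul_add, trace_add, Complex.add_re, hS_star, Complex.star_def, Complex.conj_re]
  ring

theorem stmt17_general {N M : ℕ}
    (X Y : Matrix (Fin N) (Fin N) ℂ) (hX : X.PosDef) (hY : Y.PosDef)
    (W R : Matrix (Fin N) (Fin M) ℂ) (hW : Wᴴ * W = 1) :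
    HasDerivAt
      (fun ε : ℝ =>
        Real.log (((W + ε • R)ᴴ * ((2 : ℂ)⁻¹ • (X + Y)) * (W + ε • R)).det.re)
          - (1 / 2) * Real.log
              ((((W + ε • R)ᴴ * X * (W + ε • R)) * ((W + ε • R)ᴴ * Y * (W + ε • R))).det.re))
      ((((2 : ℂ) • ((X + Y) * W * (Wᴴ * X * W + Wᴴ * Y * W)⁻¹)
          - X * W * (Wᴴ * X * W)⁻¹ - Y * W * (Wᴴ * Y * W)⁻¹)ᴴ * R).trace.re)
      0 := by
  have hWinj : Function.Injective W.mulVec :=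
    Function.LeftInverse.injective (g := Wᴴ.mulVec) fun v => by
      rw [mulVec_mulVec, hW, one_mulVec]
  have hS : ((2 : ℂ)⁻¹ • (X + Y)).PosDef := (hX.add hY).smul (by norm_num)
  have hQS := hS.conjTranspose_mul_mul_same hWinj
  have hQX := hX.conjTranspose_mul_mul_same hWinj
  have hQY := hY.conjTranspose_mul_mul_same hWinj
  have hQXY := (hX.add hY).conjTranspose_mul_mul_same hWinj
  have hlogS := (hasDerivAt_det_conjTranspose_mul_mul _ W R hQS.det_pos.ne').log_re_of_eq_mul
    (by simp) hQS.det_pos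
  have hlogXY := ((hasDerivAt_det_conjTranspose_mul_mul X W R hQX.det_pos.ne').mul_of_eq_mul
    (hasDerivAt_det_conjTranspose_mul_mul Y W R hQY.det_pos.ne') (by simp) (by simp)
    ).log_re_of_eq_mul (by simp) (mul_pos hQX.det_pos hQY.det_pos)
  simp only [det_mul]
  refine (hlogS.sub (hlogXY.const_mul (1 / 2))).congr_deriv ?_
  have hGS : (2 : ℂ)⁻¹ • (X + Y) * W * (Wᴴ * ((2 : ℂ)⁻¹ • (X + Y)) * W)⁻¹
      = (X + Y) * W * (Wᴴ * X * W + Wᴴ * Y * W)⁻¹ := by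
    rw [smul_mul_mul_inv_conjTranspose_smul_mul_mul (by norm_num) _ _ hQXY.det_pos.ne'.isUnit,
      Matrix.mul_add Wᴴ, Matrix.add_mul (Wᴴ * X)]
  rw [Complex.add_re, re_trace_mul_conjTranspose_mul_mul_add hS.1 hQS.inv.1,
    re_trace_mul_conjTranspose_mul_mul_add hX.1 hQX.inv.1,
    re_trace_mul_conjTranspose_mul_mul_add hY.1 hQY.inv.1, hGS]
  simp only [conjTranspose_sub, conjTranspose_smul, star_ofNat, Matrix.sub_mul, Matrix.smul_mul,
    trace_sub, trace_smul, smul_eq_mul, Complex.sub_re, Complex.mul_re, Complex.re_ofNat,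
    Complex.im_ofNat]
  ring

theorem stmt17 {N M : ℕ} (hMN : M ≤ N)
    (X Y : Matrix (Fin N) (Fin N) ℂ) (hX : X.PosDef) (hY : Y.PosDef)
    (W R : Matrix (Fin N) (Fin M) ℂ) (hW : Wᴴ * W = 1) :
    HasDerivAt
      (fun ε : ℝ =>
        Real.log (((W + ε • R)ᴴ * ((2 : ℂ)⁻¹ • (X + Y)) * (W + ε • R)).det.re)
          - (1 / 2) * Real.log
              ((((W + ε • R)ᴴ * X * (W + ε • R)) * ((W + ε • R)ᴴ * Y * (W + ε • R))).det.re))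
      ((((2 : ℂ) • ((X + Y) * W * (Wᴴ * X * W + Wᴴ * Y * W)⁻¹)
          - X * W * (Wᴴ * X * W)⁻¹ - Y * W * (Wᴴ * Y * W)⁻¹)ᴴ * R).trace.re)
      0 :=
  stmt17_general X Y hX hY W R hW
end
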